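/- Let l ∈ ℕ, t_c, t_p ∈ ℝ with t_c, t_p > 0, t_Map, t_a ∈ ℝ with t_Map, t_a ≥ 0 and t_Map + t_a > 0, and additionally assume t_a > 0. Then the function a(K) = (t_p + t_c + t_Map + (l-1)·t_a) / ((K-1)·t_a + t_p + (log₂(K)+1)·t_c + (t_Map + (l-K)·t_a)/K), defined on (1, ∞), has exactly one critical point K₀ in (1, ∞), and K₀ is a strict local (indeed global on [1,∞)) maximum of a, provided -t_a - t_c/ln 2 + t_Map + l·t_a > 0 (so that K₀ > 1). -/

import Mathlib

/-!
Writing `c = t_c / ln 2` and `M = t_Map + l·t_a`, the parallel time satisfies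
`T_K' = (t_a K² + c K - M) / K²`. The numerator is strictly increasing for `K ≥ 0`, negative at
`K = 1` by the hypothesis on `M`, and nonnegative at `K = M / c`, so it has exactly one root
`K₀ > 1`: `T_K` decreases on `[1, K₀]` and increases afterwards. Since `T_K > 0`, the speedup
`T₁ / T_K` has its only critical point and its maximum on `[1, ∞)` at `K₀`.
-/

open Real Set

theorem isMinOn_Ici_of_hasDerivAt {f f' : ℝ → ℝ} {a x₀ : ℝ} (hax : a ≤ x₀)
    (hf : ∀ x ∈ Ici a, HasDerivAt f (f' x) x) (hneg : ∀ x ∈ Ioo a x₀, f' x ≤ 0)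
    (hpos : ∀ x ∈ Ioi x₀, 0 ≤ f' x) : IsMinOn f (Ici a) x₀ := by
  have hcont : ContinuousOn f (Ici a) := fun x hx => (hf x hx).continuousAt.continuousWithinAt
  have hanti : AntitoneOn f (Icc a x₀) := by
    refine antitoneOn_of_hasDerivWithinAt_nonpos (f' := f') (convex_Icc a x₀)
      (hcont.mono Icc_subset_Ici_self) (fun x hx => ?_) (fun x hx => ?_)
    · rw [interior_Icc] at hx
      exact (hf x hx.1.le).hasDerivWithinAt
    · rw [interior_Icc] at hx
      exact hneg x hx
  have hmono : MonotoneOn f (Ici x₀) := by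
    refine monotoneOn_of_hasDerivWithinAt_nonneg (f' := f') (convex_Ici x₀)
      (hcont.mono (Ici_subset_Ici.mpr hax)) (fun x hx => ?_) (fun x hx => ?_)
    · rw [interior_Ici] at hx
      exact (hf x (hax.trans hx.le)).hasDerivWithinAt
    · rw [interior_Ici] at hx
      exact hpos x hx
  intro x hx
  rcases le_total x x₀ with h | h
  · exact hanti ⟨hx, h⟩ ⟨hax, le_rfl⟩ h
  · exact hmono self_mem_Ici h h

theorem IsMinOn.isMaxOn_const_div {α : Type*} {f : α → ℝ} {s : Set α} {x₀ : α}
    (hmin : IsMinOn f s x₀) (hpos : 0 < f x₀) {c : ℝ} (hc : 0 ≤ c) :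
    IsMaxOn (fun x => c / f x) s x₀ := fun _ hx =>
  div_le_div_of_nonneg_left hc hpos (hmin hx)

theorem deriv_const_div_eq_zero_iff {f : ℝ → ℝ} {f' x c : ℝ} (hf : HasDerivAt f f' x)
    (hfx : f x ≠ 0) (hc : c ≠ 0) : deriv (fun y => c / f y) x = 0 ↔ f' = 0 := by
  rw [deriv_const_div c hf.differentiableAt hfx, hf.deriv]
  simp [hc, hfx]

theorem strictMonoOn_quadratic {a b c : ℝ} (ha : 0 ≤ a) (hb : 0 < b) :
    StrictMonoOn (fun x => a * x ^ 2 + b * x - c) (Ici 0) := by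
  intro x (hx : 0 ≤ x) y _ hxy
  show a * x ^ 2 + b * x - c < a * y ^ 2 + b * y - c
  nlinarith [mul_nonneg (mul_nonneg ha (sub_pos.mpr hxy).le) (add_nonneg hx (hx.trans hxy.le)),
    mul_pos hb (sub_pos.mpr hxy)]

theorem exists_quadratic_root_gt_one {a b c : ℝ} (ha : 0 ≤ a) (hb : 0 < b) (habc : a + b < c) :
    ∃ x₀, 1 < x₀ ∧ a * x₀ ^ 2 + b * x₀ - c = 0 := by
  have hcb : 1 ≤ c / b := by rw [le_div_iff₀ hb]; linarith
  have hval : a * (c / b) ^ 2 + b * (c / b) - c = a * (c / b) ^ 2 := by field_simp; ring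
  obtain ⟨x₀, ⟨hx₁, -⟩, hroot⟩ : (0 : ℝ) ∈ (fun x => a * x ^ 2 + b * x - c) '' Icc 1 (c / b) :=
    intermediate_value_Icc hcb (by fun_prop) ⟨by linarith, by rw [hval]; positivity⟩
  refine ⟨x₀, lt_of_le_of_ne hx₁ ?_, hroot⟩
  rintro rfl
  linarith [hroot]

/-- The paper's `T_K`; the speedup is `T₁ / T_K`. -/
noncomputable def bsfTime (t_p t_c t_Map t_a l K : ℝ) : ℝ :=
  (K - 1) * t_a + t_p + (logb 2 K + 1) * t_c + (t_Map + (l - K) * t_a) / K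

section bsfTime

variable {t_p t_c t_Map t_a l : ℝ}

theorem hasDerivAt_bsfTime {K : ℝ} (hK : 0 < K) :
    HasDerivAt (bsfTime t_p t_c t_Map t_a l)
      ((t_a * K ^ 2 + t_c / log 2 * K - (t_Map + l * t_a)) / K ^ 2) K := by
  have hlogb : HasDerivAt (logb 2) (K⁻¹ / log 2) K := (hasDerivAt_log hK.ne').div_const _
  have h := ((((hasDerivAt_id K).sub_const 1).mul_const t_a).add_const t_p).add
    ((hlogb.add_const 1).mul_const t_c) |>.add
    (((((hasDerivAt_id K).const_sub l).mul_const t_a).const_add t_Map).div (hasDerivAt_id K) hK.ne')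
  refine h.congr_deriv ?_
  have := hK.ne'
  simp only [id]
  field_simp
  ring

theorem bsfTime_pos (htp : 0 < t_p) (htc : 0 < t_c) (hta : 0 ≤ t_a)
    (hwork : 0 ≤ t_Map + (l - 1) * t_a) {K : ℝ} (hK : 1 ≤ K) :
    0 < bsfTime t_p t_c t_Map t_a l K := by
  have hK0 : 0 < K := zero_lt_one.trans_le hK
  have hsplit : bsfTime t_p t_c t_Map t_a l K
      = t_p + (logb 2 K + 1) * t_c + (t_a * (K - 1) ^ 2 + (t_Map + (l - 1) * t_a)) / K := by
    have := hK0.ne'; unfold bsfTime; field_simp; ring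
  have hlog : 0 ≤ logb 2 K := logb_nonneg one_lt_two hK
  rw [hsplit]
  positivity

end bsfTime

theorem bsf_speedup_unique_max_general (l : ℕ)
    (t_p t_c t_Map t_a : ℝ) (htp : 0 < t_p) (htc : 0 < t_c)
    (hta0 : 0 ≤ t_a)
    (hgt1 : 0 < -t_a - t_c / Real.log 2 + t_Map + (l : ℝ) * t_a) :
    ∃ K₀ : ℝ, K₀ ∈ Set.Ioi (1 : ℝ) ∧
      deriv (fun K : ℝ => (t_p + t_c + t_Map + ((l : ℝ) - 1) * t_a) /
        ((K - 1) * t_a + t_p + (Real.logb 2 K + 1) * t_c +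
          (t_Map + ((l : ℝ) - K) * t_a) / K)) K₀ = 0 ∧
      (∀ K ∈ Set.Ioi (1 : ℝ),
        deriv (fun K : ℝ => (t_p + t_c + t_Map + ((l : ℝ) - 1) * t_a) /
          ((K - 1) * t_a + t_p + (Real.logb 2 K + 1) * t_c +
            (t_Map + ((l : ℝ) - K) * t_a) / K)) K = 0 → K = K₀) ∧
      IsMaxOn (fun K : ℝ => (t_p + t_c + t_Map + ((l : ℝ) - 1) * t_a) /
        ((K - 1) * t_a + t_p + (Real.logb 2 K + 1) * t_c +
          (t_Map + ((l : ℝ) - K) * t_a) / K)) (Set.Ici 1) K₀ := by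
  have hc : 0 < t_c / log 2 := div_pos htc (log_pos one_lt_two)
  have hwork : 0 ≤ t_Map + ((l : ℝ) - 1) * t_a := by linarith
  have hT : ∀ K : ℝ, 1 ≤ K → 0 < bsfTime t_p t_c t_Map t_a l K :=
    fun K hK => bsfTime_pos htp htc hta0 hwork hK
  obtain ⟨K₀, hK₀, hroot⟩ := exists_quadratic_root_gt_one (c := t_Map + l * t_a) hta0 hc (by linarith)
  have hK₀0 : 0 < K₀ := one_pos.trans hK₀
  have hq := strictMonoOn_quadratic (c := t_Map + l * t_a) hta0 hc
  have hcrit : ∀ K ∈ Ioi (1 : ℝ),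
      deriv (fun K => (t_p + t_c + t_Map + ((l : ℝ) - 1) * t_a) / bsfTime t_p t_c t_Map t_a l K) K
        = 0 ↔ K = K₀ := by
    intro K (hK : 1 < K)
    have hK0 : 0 < K := one_pos.trans hK
    rw [deriv_const_div_eq_zero_iff (hasDerivAt_bsfTime hK0) (hT K hK.le).ne' (by linarith),
      div_eq_zero_iff, or_iff_left (by positivity), ← hroot]
    exact hq.injOn.eq_iff hK0.le hK₀0.le
  refine ⟨K₀, hK₀, (hcrit K₀ hK₀).2 rfl, fun K hK => (hcrit K hK).1, ?_⟩
  refine (isMinOn_Ici_of_hasDerivAt hK₀.le (fun K hK => hasDerivAt_bsfTime (one_pos.trans_le hK))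
    (fun K hK => ?_) (fun K hK => ?_)).isMaxOn_const_div (hT K₀ hK₀.le) (by linarith)
  · exact div_nonpos_of_nonpos_of_nonneg
      (hroot ▸ (hq (one_pos.trans hK.1).le hK₀0.le hK.2).le) (sq_nonneg K)
  · exact div_nonneg
      (hroot ▸ (hq hK₀0.le (hK₀0.trans hK).le hK).le) (sq_nonneg K)

/-- Proposition 1: the BSF speedup function has exactly one critical point on
(1, ∞), and it is the (global on [1, ∞)) maximum. -/
theorem bsf_speedup_unique_max (l : ℕ)
    (t_p t_c t_Map t_a : ℝ) (htp : 0 < t_p) (htc : 0 < t_c)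
    (htMap : 0 ≤ t_Map) (hta0 : 0 ≤ t_a) (hsum : 0 < t_Map + t_a) (hta : 0 < t_a)
    (hgt1 : 0 < -t_a - t_c / Real.log 2 + t_Map + (l : ℝ) * t_a) :
    ∃ K₀ : ℝ, K₀ ∈ Set.Ioi (1 : ℝ) ∧
      deriv (fun K : ℝ => (t_p + t_c + t_Map + ((l : ℝ) - 1) * t_a) /
        ((K - 1) * t_a + t_p + (Real.logb 2 K + 1) * t_c +
          (t_Map + ((l : ℝ) - K) * t_a) / K)) K₀ = 0 ∧
      (∀ K ∈ Set.Ioi (1 : ℝ),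
        deriv (fun K : ℝ => (t_p + t_c + t_Map + ((l : ℝ) - 1) * t_a) /
          ((K - 1) * t_a + t_p + (Real.logb 2 K + 1) * t_c +
            (t_Map + ((l : ℝ) - K) * t_a) / K)) K = 0 → K = K₀) ∧
      IsMaxOn (fun K : ℝ => (t_p + t_c + t_Map + ((l : ℝ) - 1) * t_a) /
        ((K - 1) * t_a + t_p + (Real.logb 2 K + 1) * t_c +
          (t_Map + ((l : ℝ) - K) * t_a) / K)) (Set.Ici 1) K₀ :=
  bsf_speedup_unique_max_general l t_p t_c t_Map t_a htp htc hta0 hgt1
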